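/- There exist δ₀ > 0 and a measurable function F : ℝ^d → ℝ with ∫_{ℝ^d} F(y)² L(y,θ*) dy < ∞ such that the following holds for every δ ∈ (0, δ₀] and every θ ∈ ℝ^d: if g₀ ∈ G is any minimizer of g ↦ ‖gθ − θ*‖ over G, and v = H̄(g₀θ − θ*), w = (I − H̄)(g₀θ − θ*) satisfy ‖v‖² + ‖w‖⁴ ≤ δ², then |log L(y,θ) − log L(y,θ*)| ≤ δ·F(y) for all y ∈ ℝ^d. -/

import Mathlib

open MeasureTheory
open scoped BigOperators RealInnerProductSpace

noncomputable section

abbrev Euc (d : ℕ) := EuclideanSpace ℝ (Fin d)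
abbrev Iso (d : ℕ) := Euc d ≃ₗᵢ[ℝ] Euc d

/-- The average `H̄ = (1/|H|) ∑_{h∈H} h` of a finite subgroup of linear isometries. -/
def groupAvg {d : ℕ} (H : Subgroup (Iso d)) [Fintype H] : Euc d →ₗ[ℝ] Euc d :=
  (Fintype.card H : ℝ)⁻¹ • ∑ h : H, ((h : Iso d).toLinearEquiv : Euc d →ₗ[ℝ] Euc d)

/-- The density `L(y,θ)` of the Gaussian mixture `P_θ = (1/|G|) ∑_{g∈G} N(gθ, I_d)`
with respect to Lebesgue measure on `ℝ^d`. -/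
def density {d : ℕ} (G : Subgroup (Iso d)) [Fintype G] (y θ : Euc d) : ℝ :=
  (1 / ((Fintype.card G : ℝ) * (2 * Real.pi) ^ ((d : ℝ) / 2))) *
    ∑ g : G, Real.exp (-‖y - (g : Iso d) θ‖ ^ 2 / 2)

/-- The population log-likelihood `Ψ(θ) = ∫ log L(y,θ) · L(y,θ*) dy`. -/
def popLogLik {d : ℕ} (G : Subgroup (Iso d)) [Fintype G] (θstar θ : Euc d) : ℝ :=
  ∫ y : Euc d, Real.log (density G y θ) * density G y θstar

/-!
Since `L(y, gθ) = L(y, θ)` for `g ∈ G`, we may replace `θ` by `g₀θ = θ* + v + w`, where `v` is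
fixed by the stabiliser `H` and `∑_{h ∈ H} h w = 0`, and then average over `h ∈ H` the densities
at `h(g₀θ) = θ* + v + h w`. Expanding the square, the Gaussian term of index `(g, h)` is
`exp (-‖y - gθ*‖² / 2)` times a factor `exp (O(δ (1 + ‖y‖)))` coming from `v`, times
`exp ⟪y - gθ*, g h w⟫`. These last exponents have mean zero over `h` and modulus at most
`M = (‖y‖ + ‖θ*‖) ‖w‖`, so their average lies in `[1, 1 + M² e^M]`, and `M² ≤ (‖y‖ + ‖θ*‖)² δ`.
Comparing the two mixtures term by term bounds the log-ratio by `δ F(y)` with `F` growing like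
`exp (2 ‖y‖)`, which is square integrable against a Gaussian mixture.
-/

open Real

theorem Real.exp_le_one_add_add_sq_mul_exp {s M : ℝ} (hs : |s| ≤ M) :
    exp s ≤ 1 + s + M ^ 2 * exp M := by
  have hsub : ∀ t : ℝ, exp t - 1 ≤ t * exp t := fun t => by
    have h := add_one_le_exp (-t)
    have hmul : exp (-t) * exp t = 1 := by rw [← exp_add]; simp
    nlinarith [exp_pos t]
  have hquad : s * (exp s - 1) ≤ s ^ 2 * exp |s| := by
    rcases le_or_gt 0 s with hs0 | hs0
    · rw [abs_of_nonneg hs0]; nlinarith [hsub s]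
    · nlinarith [add_one_le_exp s, one_le_exp (abs_nonneg s), sq_nonneg s]
  have hM : s ^ 2 * exp |s| ≤ M ^ 2 * exp M := by
    rw [← sq_abs s]
    gcongr
  nlinarith [hsub s]

theorem Real.abs_log_sub_log_le {a b A : ℝ} (ha : 0 < a) (hlow : exp (-A) * a ≤ b)
    (hup : b ≤ exp A * a) : |log b - log a| ≤ A := by
  have hb : 0 < b := lt_of_lt_of_le (by positivity) hlow
  have h₁ := log_le_log (by positivity) hlow
  have h₂ := log_le_log hb hup
  rw [log_mul (exp_pos _).ne' ha.ne', log_exp] at h₁ h₂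
  rw [abs_le]
  constructor <;> linarith

section MeanZeroExponents

variable {ι : Type*} [Fintype ι] {s : ι → ℝ}

theorem card_le_sum_exp_of_sum_eq_zero (hs : ∑ i, s i = 0) :
    (Fintype.card ι : ℝ) ≤ ∑ i, exp (s i) := by
  have h := Finset.sum_le_sum fun i (_ : i ∈ Finset.univ) => add_one_le_exp (s i)
  simpa [Finset.sum_add_distrib, hs] using h

theorem sum_exp_le_of_sum_eq_zero (hs : ∑ i, s i = 0) {M : ℝ} (hM : ∀ i, |s i| ≤ M) :
    ∑ i, exp (s i) ≤ Fintype.card ι * (1 + M ^ 2 * exp M) := by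
  have h := Finset.sum_le_sum fun i (_ : i ∈ Finset.univ) =>
    exp_le_one_add_add_sq_mul_exp (hM i)
  simp only [Finset.sum_add_distrib, hs, Finset.sum_const, Finset.card_univ,
    nsmul_eq_mul] at h
  linarith

end MeanZeroExponents

def envelope (t : ℝ) : ℝ := t + 2 + t ^ 2 * exp t

@[fun_prop]
theorem continuous_envelope : Continuous envelope := by
  unfold envelope
  fun_prop

theorem envelope_nonneg {t : ℝ} (ht : 0 ≤ t) : 0 ≤ envelope t := by
  unfold envelope
  positivity

theorem envelope_mono : MonotoneOn envelope (Set.Ici 0) := by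
  intro s hs t ht hst
  unfold envelope
  gcongr

theorem envelope_le_four_mul_exp {t : ℝ} (ht : 0 ≤ t) : envelope t ≤ 4 * exp (2 * t) := by
  have h₁ := add_one_le_exp t
  have h₂ := quadratic_le_exp_of_nonneg ht
  have h₃ : exp t ≤ exp (2 * t) := exp_le_exp.mpr (by linarith)
  have hsq : exp (2 * t) = exp t * exp t := by rw [← exp_add]; ring_nf
  unfold envelope
  nlinarith [exp_pos t]

section GaussianKernel

variable {E : Type*} [NormedAddCommGroup E] [InnerProductSpace ℝ E]

theorem exp_neg_sq_norm_sub_add (x v u : E) :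
    exp (-‖x - (v + u)‖ ^ 2 / 2) =
      exp (-‖x‖ ^ 2 / 2) * exp (⟪x, v⟫ - ‖v + u‖ ^ 2 / 2) * exp ⟪x, u⟫ := by
  rw [← exp_add, ← exp_add, norm_sub_sq_real, inner_add_right]
  ring_nf

variable {ι : Type*} [Fintype ι] {x v : E} {w : ι → E}

theorem sum_inner_eq_zero (hw : ∑ i, w i = 0) : ∑ i, ⟪x, w i⟫ = 0 := by
  rw [← inner_sum, hw, inner_zero_right]

theorem avg_exp_neg_sq_norm_sub_le (hw : ∑ i, w i = 0) {δ : ℝ} (hδ : δ ≤ 1) (hv : ‖v‖ ≤ δ)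
    (hwδ : ∀ i, ‖w i‖ ^ 2 ≤ δ) :
    (Fintype.card ι : ℝ)⁻¹ * ∑ i, exp (-‖x - (v + w i)‖ ^ 2 / 2) ≤
      exp (δ * envelope ‖x‖) * exp (-‖x‖ ^ 2 / 2) := by
  have hδ0 : 0 ≤ δ := (norm_nonneg v).trans hv
  set M := ‖x‖ * √δ
  set K := exp (-‖x‖ ^ 2 / 2) * exp (‖x‖ * δ)
  have hinner : ∀ i, |⟪x, w i⟫| ≤ M := fun i =>
    (abs_real_inner_le_norm x (w i)).trans <| mul_le_mul_of_nonneg_left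
      ((abs_norm (w i)).symm.le.trans (Real.abs_le_sqrt (hwδ i))) (norm_nonneg x)
  have hterm : ∀ i, exp (-‖x - (v + w i)‖ ^ 2 / 2) ≤ K * exp ⟪x, w i⟫ := fun i => by
    rw [exp_neg_sq_norm_sub_add]
    have : ⟪x, v⟫ ≤ ‖x‖ * δ :=
      (real_inner_le_norm x v).trans (mul_le_mul_of_nonneg_left hv (norm_nonneg x))
    simp only [K]
    gcongr
    nlinarith [sq_nonneg ‖v + w i‖]
  have hM : ‖x‖ * δ + M ^ 2 * exp M ≤ δ * envelope ‖x‖ := by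
    have hexp : exp M ≤ exp ‖x‖ :=
      exp_le_exp.mpr (mul_le_of_le_one_right (norm_nonneg x) (Real.sqrt_le_one.mpr hδ))
    have hM2 : M ^ 2 = δ * ‖x‖ ^ 2 := by rw [mul_pow, sq_sqrt hδ0]; ring
    unfold envelope
    rw [hM2]
    nlinarith [mul_le_mul_of_nonneg_left hexp (by positivity : 0 ≤ δ * ‖x‖ ^ 2)]
  calc (Fintype.card ι : ℝ)⁻¹ * ∑ i, exp (-‖x - (v + w i)‖ ^ 2 / 2)
      ≤ (Fintype.card ι : ℝ)⁻¹ * (K * ∑ i, exp ⟪x, w i⟫) := by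
        rw [Finset.mul_sum _ _ K]
        gcongr with i
        exact hterm i
    _ ≤ (Fintype.card ι : ℝ)⁻¹ * (K * (Fintype.card ι * (1 + M ^ 2 * exp M))) := by
        gcongr
        exact sum_exp_le_of_sum_eq_zero (sum_inner_eq_zero hw) hinner
    _ ≤ K * (1 + M ^ 2 * exp M) := by
        rw [mul_left_comm K]
        exact inv_mul_left_le (by positivity)
    _ ≤ K * exp (M ^ 2 * exp M) := by gcongr; linarith [add_one_le_exp (M ^ 2 * exp M)]
    _ ≤ exp (δ * envelope ‖x‖) * exp (-‖x‖ ^ 2 / 2) := by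
        rw [mul_assoc, ← exp_add, mul_comm]
        gcongr

theorem exp_neg_mul_le_avg_exp_neg_sq_norm_sub [Nonempty ι] (hw : ∑ i, w i = 0) {δ : ℝ}
    (hδ : δ ≤ 1) (hv : ‖v‖ ≤ δ) (hwδ : ∀ i, ‖w i‖ ^ 2 ≤ δ) :
    exp (-(δ * envelope ‖x‖)) * exp (-‖x‖ ^ 2 / 2) ≤
      (Fintype.card ι : ℝ)⁻¹ * ∑ i, exp (-‖x - (v + w i)‖ ^ 2 / 2) := by
  have hδ0 : 0 ≤ δ := (norm_nonneg v).trans hv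
  set K := exp (-‖x‖ ^ 2 / 2) * exp (-(‖x‖ * δ + 2 * δ))
  have hterm : ∀ i, K * exp ⟪x, w i⟫ ≤ exp (-‖x - (v + w i)‖ ^ 2 / 2) := fun i => by
    rw [exp_neg_sq_norm_sub_add]
    have hxv : -(‖x‖ * δ) ≤ ⟪x, v⟫ := neg_le_of_abs_le <| (abs_real_inner_le_norm x v).trans
      (mul_le_mul_of_nonneg_left hv (norm_nonneg x))
    have hvw : ‖v + w i‖ ^ 2 ≤ 4 * δ := by
      have htri := pow_le_pow_left₀ (norm_nonneg _) (norm_add_le v (w i)) 2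
      have hv2 : ‖v‖ ^ 2 ≤ δ := by nlinarith [norm_nonneg v]
      nlinarith [sq_nonneg (‖v‖ - ‖w i‖), hwδ i]
    simp only [K]
    gcongr
    linarith
  have hcard : (0 : ℝ) < Fintype.card ι := Nat.cast_pos.mpr Fintype.card_pos
  calc exp (-(δ * envelope ‖x‖)) * exp (-‖x‖ ^ 2 / 2) ≤ K := by
        rw [mul_comm]
        simp only [K]
        gcongr
        unfold envelope
        nlinarith [mul_nonneg hδ0 (mul_nonneg (sq_nonneg ‖x‖) (exp_pos ‖x‖).le)]
    _ = (Fintype.card ι : ℝ)⁻¹ * (K * Fintype.card ι) := by field_simp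
    _ ≤ (Fintype.card ι : ℝ)⁻¹ * (K * ∑ i, exp ⟪x, w i⟫) := by
        gcongr
        exact card_le_sum_exp_of_sum_eq_zero (sum_inner_eq_zero hw)
    _ ≤ (Fintype.card ι : ℝ)⁻¹ * ∑ i, exp (-‖x - (v + w i)‖ ^ 2 / 2) := by
        rw [Finset.mul_sum _ _ K]
        gcongr with i
        exact hterm i

end GaussianKernel

section GroupAverage

variable {d : ℕ} (H : Subgroup (Iso d)) [Fintype H]

theorem groupAvg_apply (x : Euc d) :
    groupAvg H x = (Fintype.card H : ℝ)⁻¹ • ∑ h : H, (h : Iso d) x := by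
  simp [groupAvg, LinearMap.sum_apply]

theorem map_groupAvg {h : Iso d} (hh : h ∈ H) (x : Euc d) : h (groupAvg H x) = groupAvg H x := by
  rw [groupAvg_apply, map_smul, map_sum]
  congr 1
  exact Fintype.sum_equiv (Equiv.mulLeft (⟨h, hh⟩ : H)) _ _ fun _ => rfl

theorem sum_map_sub_groupAvg (x : Euc d) : ∑ h : H, (h : Iso d) (x - groupAvg H x) = 0 := by
  have hcard : (Fintype.card H : ℝ) ≠ 0 := (Nat.cast_pos.mpr Fintype.card_pos).ne'
  simp only [map_sub, Finset.sum_sub_distrib, fun h : H => map_groupAvg H h.2 x,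
    Finset.sum_const, Finset.card_univ]
  rw [groupAvg_apply, ← Nat.cast_smul_eq_nsmul ℝ, smul_smul, mul_inv_cancel₀ hcard, one_smul,
    sub_self]

end GroupAverage

section Density

variable {d : ℕ} {G : Subgroup (Iso d)} [Fintype G]

theorem density_pos (y θ : Euc d) : 0 < density G y θ := by
  unfold density
  have : 0 < ∑ g : G, exp (-‖y - (g : Iso d) θ‖ ^ 2 / 2) :=
    Finset.sum_pos (fun g _ => exp_pos _) Finset.univ_nonempty
  positivity

theorem density_map_of_mem {g : Iso d} (hg : g ∈ G) (y θ : Euc d) :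
    density G y (g θ) = density G y θ := by
  unfold density
  congr 1
  exact Fintype.sum_equiv (Equiv.mulRight (⟨g, hg⟩ : G)) _ _ fun _ => rfl

variable {H : Subgroup (Iso d)} [Fintype H]

theorem density_eq_avg_map (hHG : H ≤ G) (y θ : Euc d) :
    density G y θ = (Fintype.card H : ℝ)⁻¹ * ∑ h : H, density G y ((h : Iso d) θ) := by
  have hcard : (Fintype.card H : ℝ) ≠ 0 := (Nat.cast_pos.mpr Fintype.card_pos).ne'
  simp only [fun h : H => density_map_of_mem (hHG h.2) y θ, Finset.sum_const, Finset.card_univ,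
    nsmul_eq_mul, inv_mul_cancel_left₀ hcard]

theorem density_add_add_eq {θ v : Euc d} (hHG : H ≤ G) (hθ : ∀ h ∈ H, h θ = θ)
    (hv : ∀ h ∈ H, h v = v) (y w : Euc d) :
    density G y (θ + v + w) = 1 / ((Fintype.card G : ℝ) * (2 * π) ^ ((d : ℝ) / 2)) *
      ∑ g : G, (Fintype.card H : ℝ)⁻¹ * ∑ h : H,
        exp (-‖(y - (g : Iso d) θ) - ((g : Iso d) v + (g : Iso d) ((h : Iso d) w))‖ ^ 2 / 2) := by
  rw [density_eq_avg_map hHG]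
  simp only [density, map_add, fun h : H => hθ h h.2, fun h : H => hv h h.2]
  simp only [Finset.mul_sum, sub_sub, add_assoc]
  rw [Finset.sum_comm]
  ring_nf

theorem abs_log_density_add_add_sub_le {θ v w : Euc d} (hHG : H ≤ G) (hθ : ∀ h ∈ H, h θ = θ)
    (hv : ∀ h ∈ H, h v = v) (hw : ∑ h : H, (h : Iso d) w = 0) {δ : ℝ} (hδ : δ ≤ 1)
    (hvδ : ‖v‖ ≤ δ) (hwδ : ‖w‖ ^ 2 ≤ δ) (y : Euc d) :
    |log (density G y (θ + v + w)) - log (density G y θ)| ≤ δ * envelope (‖y‖ + ‖θ‖) := by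
  set A := δ * envelope (‖y‖ + ‖θ‖)
  have hA : ∀ g : G, δ * envelope ‖y - (g : Iso d) θ‖ ≤ A := fun g => by
    have hyθ : ‖y - (g : Iso d) θ‖ ≤ ‖y‖ + ‖θ‖ := by
      simpa only [LinearIsometryEquiv.norm_map] using norm_sub_le y ((g : Iso d) θ)
    exact mul_le_mul_of_nonneg_left
      (envelope_mono (norm_nonneg _) (by positivity : 0 ≤ ‖y‖ + ‖θ‖) hyθ)
      ((norm_nonneg v).trans hvδ)
  have hgw : ∀ g : G, ∑ h : H, (g : Iso d) ((h : Iso d) w) = 0 := fun g => by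
    rw [← map_sum, hw, map_zero]
  have hgwδ : ∀ (g : G) (h : H), ‖(g : Iso d) ((h : Iso d) w)‖ ^ 2 ≤ δ := fun g h => by
    simpa only [LinearIsometryEquiv.norm_map] using hwδ
  have hgvδ : ∀ g : G, ‖(g : Iso d) v‖ ≤ δ := fun g => by
    simpa only [LinearIsometryEquiv.norm_map] using hvδ
  apply abs_log_sub_log_le (density_pos y θ)
  · rw [density_add_add_eq hHG hθ hv, density, mul_left_comm (exp (-A)), Finset.mul_sum]
    gcongr _ * ?_
    refine Finset.sum_le_sum fun g _ => ?_
    exact (mul_le_mul_of_nonneg_right (exp_le_exp.mpr (neg_le_neg (hA g))) (exp_pos _).le).trans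
      (exp_neg_mul_le_avg_exp_neg_sq_norm_sub (hgw g) hδ (hgvδ g) (hgwδ g))
  · rw [density_add_add_eq hHG hθ hv, density, mul_left_comm (exp A), Finset.mul_sum _ _ (exp A)]
    gcongr _ * ?_
    refine Finset.sum_le_sum fun g _ => ?_
    exact (avg_exp_neg_sq_norm_sub_le (hgw g) hδ (hgvδ g) (hgwδ g)).trans
      (mul_le_mul_of_nonneg_right (exp_le_exp.mpr (hA g)) (exp_pos _).le)

end Density

section Integrability

variable {V : Type*} [NormedAddCommGroup V] [InnerProductSpace ℝ V] [FiniteDimensional ℝ V]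
  [MeasurableSpace V] [BorelSpace V]

theorem integrable_exp_neg_mul_sq_norm {b : ℝ} (hb : 0 < b) :
    Integrable (fun y : V => exp (-b * ‖y‖ ^ 2)) := by
  have h := (GaussianFourier.integrable_cexp_neg_mul_sq_norm_add (V := V) (b := (b : ℂ))
    (by simpa using hb) 0 0).norm
  refine h.congr (Filter.Eventually.of_forall fun y => ?_)
  simp [Complex.norm_exp, ← Complex.ofReal_pow]

theorem integrable_exp_mul_norm_mul_exp_neg_sq_norm_sub (a : ℝ) (μ : V) :
    Integrable (fun y : V => exp (a * ‖y‖) * exp (-‖y - μ‖ ^ 2 / 2)) := by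
  refine ((integrable_exp_neg_mul_sq_norm (by norm_num : (0 : ℝ) < 1 / 8)).const_mul
    (exp (2 * a ^ 2 + ‖μ‖ ^ 2 / 2))).mono' (by fun_prop : Continuous _).aestronglyMeasurable
    (Filter.Eventually.of_forall fun y => ?_)
  rw [Real.norm_of_nonneg (by positivity), ← exp_add, ← exp_add]
  refine exp_le_exp.mpr ?_
  have hq : (‖y‖ - ‖μ‖) ^ 2 ≤ ‖y - μ‖ ^ 2 := by
    rw [← sq_abs]
    exact pow_le_pow_left₀ (abs_nonneg _) (abs_norm_sub_norm_le y μ) 2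
  nlinarith [sq_nonneg (‖y‖ - 2 * ‖μ‖), sq_nonneg (‖y‖ - 4 * a)]

end Integrability

theorem integrable_exp_mul_norm_mul_density {d : ℕ} (G : Subgroup (Iso d)) [Fintype G]
    (a : ℝ) (θ : Euc d) : Integrable (fun y => exp (a * ‖y‖) * density G y θ) := by
  simp only [density, mul_left_comm (exp _), Finset.mul_sum]
  exact integrable_finsetSum _ fun g _ =>
    (integrable_exp_mul_norm_mul_exp_neg_sq_norm_sub a ((g : Iso d) θ)).const_mul _

theorem integrable_envelope_sq_mul_density {d : ℕ} (G : Subgroup (Iso d)) [Fintype G]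
    (θ : Euc d) : Integrable (fun y => envelope (‖y‖ + ‖θ‖) ^ 2 * density G y θ) := by
  refine ((integrable_exp_mul_norm_mul_density G 4 θ).const_mul (16 * exp (4 * ‖θ‖))).mono'
    ?_ (Filter.Eventually.of_forall fun y => ?_)
  · unfold density
    fun_prop
  · have hD := (density_pos (G := G) y θ).le
    have henv := envelope_le_four_mul_exp (by positivity : 0 ≤ ‖y‖ + ‖θ‖)
    rw [Real.norm_of_nonneg (by positivity)]
    calc envelope (‖y‖ + ‖θ‖) ^ 2 * density G y θ
        ≤ (4 * exp (2 * (‖y‖ + ‖θ‖))) ^ 2 * density G y θ := by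
          gcongr
          exact envelope_nonneg (by positivity)
      _ = 16 * exp (4 * ‖θ‖) * (exp (4 * ‖y‖) * density G y θ) := by
        have : exp (2 * (‖y‖ + ‖θ‖)) ^ 2 = exp (4 * ‖θ‖) * exp (4 * ‖y‖) := by
          rw [← exp_nat_mul, ← exp_add]; ring_nf
        rw [mul_pow, this]
        ring

/-- Envelope lemma. There are `δ₀ > 0` and a measurable `F` with
`∫ F² L(·,θ*) < ∞` such that for every `0 < δ ≤ δ₀` and every `θ`: if `g₀` minimizes
`‖gθ - θ*‖` over `G`, `v = H̄(g₀θ - θ*)`, `w = (I - H̄)(g₀θ - θ*)` and `‖v‖² + ‖w‖⁴ ≤ δ²`,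
then `|log L(y,θ) - log L(y,θ*)| ≤ δ F(y)` for all `y`. -/
theorem loglik_envelope {d : ℕ} (G : Subgroup (Iso d)) [Fintype G] (θstar : Euc d)
    (H : Subgroup (Iso d)) [Fintype H]
    (hH : ∀ g : Iso d, g ∈ H ↔ g ∈ G ∧ g θstar = θstar) :
    ∃ δ₀ > (0 : ℝ), ∃ F : Euc d → ℝ, Measurable F ∧
      Integrable (fun y : Euc d => F y ^ 2 * density G y θstar) ∧
      ∀ δ : ℝ, 0 < δ → δ ≤ δ₀ → ∀ θ : Euc d, ∀ g₀ : Iso d, g₀ ∈ G →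
        (∀ g : Iso d, g ∈ G → ‖g₀ θ - θstar‖ ≤ ‖g θ - θstar‖) →
        ‖groupAvg H (g₀ θ - θstar)‖ ^ 2 +
            ‖(g₀ θ - θstar) - groupAvg H (g₀ θ - θstar)‖ ^ 4 ≤ δ ^ 2 →
        ∀ y : Euc d,
          |Real.log (density G y θ) - Real.log (density G y θstar)| ≤ δ * F y := by
  refine ⟨1, one_pos, fun y => envelope (‖y‖ + ‖θstar‖), by fun_prop,
    integrable_envelope_sq_mul_density G θstar, ?_⟩
  intro δ hδ hδ1 θ g₀ hg₀ _ hsmall y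
  set u := g₀ θ - θstar
  have hv : ‖groupAvg H u‖ ≤ δ := by
    refine (pow_le_pow_iff_left₀ (norm_nonneg _) hδ.le two_ne_zero).mp ?_
    nlinarith [pow_nonneg (norm_nonneg (u - groupAvg H u)) 4]
  have hw : ‖u - groupAvg H u‖ ^ 2 ≤ δ := by
    refine (pow_le_pow_iff_left₀ (by positivity) hδ.le two_ne_zero).mp ?_
    nlinarith [sq_nonneg ‖groupAvg H u‖]
  have hθ : g₀ θ = θstar + groupAvg H u + (u - groupAvg H u) := by
    simp only [u]; abel
  rw [← density_map_of_mem hg₀, hθ]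
  exact abs_log_density_add_add_sub_le (fun h hh => ((hH h).1 hh).1)
    (fun h hh => ((hH h).1 hh).2) (fun h hh => map_groupAvg H hh u) (sum_map_sub_groupAvg H u)
    hδ1 hv hw y
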